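/- arXiv:1706.00799 — 3 statements merged into one kernel-verified Lean document; each statement's English description precedes it below -/
import Mathlib

section
/- The double integral (1/(4π²)) ∫_{-π}^{π} ∫_{-π}^{π} log[4 - 2(cos k₁ + cos k₂)] dk₁ dk₂ equals 4G/π, where G = Σ_{n≥0} (-1)ⁿ/(2n+1)² is Catalan's constant. -/
open Real MeasureTheory

/-- Catalan's constant -/
noncomputable def catalanG : ℝ := ∑' n : ℕ, (-1 : ℝ)^n / (2*n+1)^2

lemma log_kernel_eq {r : ℝ} (hr0 : 0 ≤ r) (hr1 : r < 1) (t : ℝ) :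
    Real.log (1 - 2*r*Real.cos t + r^2) = -2 * ∑' n : ℕ, r^n * Real.cos (n*t) / n := by
  set z : ℂ := (r : ℂ) * Complex.exp ((t : ℂ) * Complex.I) with hzdef
  have hznorm : ‖z‖ < 1 := by
    rw [hzdef, norm_mul]
    simp [Complex.norm_exp, abs_of_nonneg hr0, hr1]
  have hzne : (1 : ℂ) - z ≠ 0 := by
    intro h
    have : ‖(1:ℂ)‖ = ‖z‖ := by rw [sub_eq_zero] at h; rw [h]
    simp at this; linarith [hznorm, this.ge]
  have hs := Complex.hasSum_taylorSeries_neg_log hznorm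
  have hre := Complex.hasSum_re hs
  have h1 : ∀ n : ℕ, ((z^n / (n:ℂ))).re = r^n * Real.cos (n*t) / n := by
    intro n
    have hzn : z ^ n / (n:ℂ) = ((r^n / n : ℝ) : ℂ) * Complex.exp (((n*t : ℝ)) * Complex.I) := by
      rw [hzdef, mul_pow, ← Complex.exp_nat_mul]
      push_cast
      ring
    rw [hzn, Complex.re_ofReal_mul, Complex.exp_ofReal_mul_I_re]
    ring
  have hre' : HasSum (fun n : ℕ => r^n * Real.cos (n*t) / n) (-(Complex.log (1 - z)).re) := by
    simp only [Complex.neg_re] at hre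
    exact hre.congr_fun (fun n => (h1 n).symm)
  have habs : 1 - 2*r*Real.cos t + r^2 = ‖1 - z‖ ^ 2 := by
    rw [Complex.sq_norm, Complex.normSq_apply]
    simp only [hzdef, Complex.sub_re, Complex.sub_im, Complex.one_re, Complex.one_im,
      Complex.mul_re, Complex.mul_im, Complex.ofReal_re, Complex.ofReal_im,
      Complex.exp_ofReal_mul_I_re, Complex.exp_ofReal_mul_I_im]
    nlinarith [Real.sin_sq_add_cos_sq t]
  rw [habs, Real.log_pow]
  rw [hre'.tsum_eq, Complex.log_re]
  push_cast
  ring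

lemma cos_int_zero {n : ℕ} (hn : 1 ≤ n) :
    ∫ t in Set.Ioc (-π) π, Real.cos ((n:ℝ)*t) = 0 := by
  have hle : (-π) ≤ π := by linarith [Real.pi_pos]
  rw [← intervalIntegral.integral_of_le hle]
  have hne : (n:ℝ) ≠ 0 := by positivity
  have h1 : Real.sin ((n:ℝ)*π) = 0 := Real.sin_nat_mul_pi n
  have h2 : Real.sin ((n:ℝ)*(-π)) = 0 := by rw [mul_neg, Real.sin_neg, h1, neg_zero]
  rw [intervalIntegral.integral_comp_mul_left Real.cos hne,
    integral_cos, h1, h2]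
  simp

lemma log_kernel_integral {r : ℝ} (hr0 : 0 ≤ r) (hr1 : r < 1) :
    ∫ t in (-π)..π, Real.log (1 - 2*r*Real.cos t + r^2) = 0 := by
  have hle : (-π) ≤ π := by linarith [Real.pi_pos]
  have hint : ∀ n : ℕ, IntegrableOn (fun t => r^n * Real.cos ((n:ℝ)*t) / n)
      (Set.Ioc (-π) π) volume := by
    intro n
    apply Continuous.integrableOn_Ioc
    fun_prop
  have hbd : ∀ n : ℕ, ∀ t : ℝ, ‖r^n * Real.cos ((n:ℝ)*t) / n‖ ≤ r^n := by
    intro n t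
    rcases Nat.eq_zero_or_pos n with rfl | hn
    · simp
    · rw [norm_div, norm_mul, norm_pow, Real.norm_eq_abs, Real.norm_eq_abs, Real.norm_eq_abs,
        abs_of_nonneg hr0]
      have h1 : |Real.cos ((n:ℝ)*t)| ≤ 1 := Real.abs_cos_le_one _
      have h2 : (1:ℝ) ≤ |(n:ℝ)| := by
        rw [abs_of_nonneg (by positivity)]; exact_mod_cast hn
      calc r^n * |Real.cos ((n:ℝ)*t)| / |(n:ℝ)| ≤ r^n * 1 / 1 := by
            apply div_le_div₀ (by positivity) (by nlinarith [pow_nonneg hr0 n]) one_pos h2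
        _ = r^n := by ring
  have hvol : (volume (Set.Ioc (-π) π)).toReal = 2*π := by
    rw [Real.volume_Ioc, ENNReal.toReal_ofReal (by linarith)]; ring
  have hsum : Summable fun n : ℕ => ∫ t in Set.Ioc (-π) π, ‖r^n * Real.cos ((n:ℝ)*t) / n‖ := by
    apply Summable.of_nonneg_of_le
      (fun n => integral_nonneg fun t => norm_nonneg _)
      (fun n => ?_) ((summable_geometric_of_lt_one hr0 hr1).mul_left (2*π))
    calc ∫ t in Set.Ioc (-π) π, ‖r^n * Real.cos ((n:ℝ)*t) / n‖
        ≤ ∫ _t in Set.Ioc (-π) π, r^n := by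
          apply setIntegral_mono_on ((hint n).norm)
            (integrableOn_const (by rw [Real.volume_Ioc]; exact ENNReal.ofReal_ne_top))
            measurableSet_Ioc
          exact fun t _ => hbd n t
      _ = 2*π * r^n := by rw [setIntegral_const, measureReal_def, hvol, smul_eq_mul]
  have hzero : ∀ n : ℕ, ∫ t in Set.Ioc (-π) π, r^n * Real.cos ((n:ℝ)*t) / n = 0 := by
    intro n
    rcases Nat.eq_zero_or_pos n with rfl | hn
    · simp
    · have heq : (fun t => r^n * Real.cos ((n:ℝ)*t) / n) = fun t => (r^n/n) * Real.cos ((n:ℝ)*t) := by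
        funext t; ring
      rw [heq, integral_const_mul, cos_int_zero hn, mul_zero]
  rw [intervalIntegral.integral_of_le hle]
  calc ∫ t in Set.Ioc (-π) π, Real.log (1 - 2*r*Real.cos t + r^2)
      = ∫ t in Set.Ioc (-π) π, -2 * ∑' n : ℕ, r^n * Real.cos ((n:ℝ)*t) / n := by
        apply setIntegral_congr_fun measurableSet_Ioc
        exact fun t _ => log_kernel_eq hr0 hr1 t
    _ = -2 * ∫ t in Set.Ioc (-π) π, ∑' n : ℕ, r^n * Real.cos ((n:ℝ)*t) / n :=
        integral_const_mul _ _
    _ = -2 * ∑' n : ℕ, ∫ t in Set.Ioc (-π) π, r^n * Real.cos ((n:ℝ)*t) / n := by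
        rw [MeasureTheory.integral_tsum_of_summable_integral_norm hint hsum]
    _ = 0 := by
        rw [tsum_congr hzero]; simp

lemma inner_integral_eq {k : ℝ} (hs : 0 < Real.sin (k/2)) :
    ∫ t in (-π)..π, Real.log (4 - 2*(Real.cos k + Real.cos t))
      = 4*π*Real.arsinh (Real.sin (k/2)) := by
  set s := Real.sin (k/2) with hsdef
  have hcos : Real.cos k = 1 - 2*s^2 := by
    have h2 : 2*(k/2) = k := by ring
    have := Real.cos_two_mul (k/2)
    have hsc := Real.sin_sq_add_cos_sq (k/2)
    rw [← h2, this]; nlinarith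
  have hsq : Real.sqrt (1 + s^2) ^ 2 = 1 + s^2 := Real.sq_sqrt (by positivity)
  have hsqpos : 0 < Real.sqrt (1 + s^2) := Real.sqrt_pos.mpr (by positivity)
  set q := s + Real.sqrt (1 + s^2) with hqdef
  have h1le : 1 ≤ Real.sqrt (1+s^2) := by nlinarith [hsq, hsqpos, sq_nonneg s]
  have hq1 : 1 < q := by rw [hqdef]; linarith
  set r := (q^2)⁻¹ with hrdef
  have hqpos : 0 < q := by linarith
  have hr0 : 0 < r := by positivity
  have hr1 : r < 1 := by
    rw [hrdef, inv_lt_one_iff₀]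
    right; nlinarith
  have hrinv : r⁻¹ = q^2 := by rw [hrdef, inv_inv]
  have hrr : r + r⁻¹ = 2 + 4*s^2 := by
    have hqne : q ≠ 0 := ne_of_gt hqpos
    have hq2 : q^2 = 1 + 2*s^2 + 2*s*Real.sqrt (1+s^2) := by
      rw [hqdef]; nlinarith [hsq]
    rw [hrdef, hrinv]
    field_simp
    rw [hq2]
    linear_combination (Real.sqrt (1+s^2)^2 + 4*s*Real.sqrt (1+s^2) + 1 + 7*s^2) * hsq
  have hkey : ∀ t, 4 - 2*(Real.cos k + Real.cos t) = (1 - 2*r*Real.cos t + r^2)/r := by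
    intro t
    rw [hcos]
    field_simp
    nlinarith [hrr]
  have hpos : ∀ t, 0 < 1 - 2*r*Real.cos t + r^2 := by
    intro t
    nlinarith [Real.cos_le_one t, Real.neg_one_le_cos t, sq_nonneg (1-r), sq_nonneg (1+r)]
  have hcongr : ∀ t, Real.log (4 - 2*(Real.cos k + Real.cos t))
      = Real.log (1 - 2*r*Real.cos t + r^2) - Real.log r := by
    intro t
    rw [hkey t, Real.log_div (ne_of_gt (hpos t)) (ne_of_gt hr0)]
  rw [intervalIntegral.integral_congr (fun t _ => hcongr t)]
  have hii : IntervalIntegrable (fun t => Real.log (1 - 2*r*Real.cos t + r^2))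
      volume (-π) π := by
    apply Continuous.intervalIntegrable
    apply Continuous.log (by fun_prop)
    exact fun t => ne_of_gt (hpos t)
  rw [intervalIntegral.integral_sub hii (intervalIntegrable_const)]
  rw [log_kernel_integral (le_of_lt hr0) hr1]
  rw [intervalIntegral.integral_const]
  have hlogr : Real.log r = -(2 * Real.log q) := by
    rw [hrdef, Real.log_inv, Real.log_pow]
    push_cast; ring
  rw [hlogr]
  have harsinh : Real.arsinh s = Real.log q := by rw [Real.arsinh, hqdef]
  rw [harsinh]
  simp only [smul_eq_mul]
  ring

lemma arsinh_eq_integral (s : ℝ) :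
    Real.arsinh s = ∫ t in (0:ℝ)..1, s / Real.sqrt (1 + (t*s)^2) := by
  have hderiv : ∀ t ∈ Set.uIcc (0:ℝ) 1, HasDerivAt (fun t => Real.arsinh (t*s))
      (s / Real.sqrt (1 + (t*s)^2)) t := by
    intro t _
    have h1 : HasDerivAt (fun t : ℝ => t*s) s t := hasDerivAt_mul_const s
    have h2 := (Real.hasDerivAt_arsinh (t*s)).comp t h1
    refine h2.congr_deriv (Eq.symm ?_)
    rw [div_eq_mul_inv, mul_comm]
  have hcont : IntervalIntegrable (fun t => s / Real.sqrt (1 + (t*s)^2)) volume 0 1 := by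
    apply Continuous.intervalIntegrable
    apply Continuous.div continuous_const (by fun_prop)
    intro t
    exact ne_of_gt (Real.sqrt_pos.mpr (by positivity))
  rw [intervalIntegral.integral_eq_sub_of_hasDerivAt hderiv hcont]
  simp

lemma inner_u_integral {t : ℝ} (ht : 0 < t) :
    ∫ u in (0:ℝ)..(π/2), Real.sin u / Real.sqrt (1 + (t*Real.sin u)^2)
      = Real.arctan t / t := by
  have htne : t ≠ 0 := ne_of_gt ht
  have hA : 0 < Real.sqrt (1+t^2) := Real.sqrt_pos.mpr (by positivity)
  have hAsq : Real.sqrt (1+t^2)^2 = 1+t^2 := Real.sq_sqrt (by positivity)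
  have hderiv : ∀ u ∈ Set.uIcc (0:ℝ) (π/2),
      HasDerivAt (fun u => -(t⁻¹ * Real.arcsin (t * Real.cos u / Real.sqrt (1+t^2))))
      (Real.sin u / Real.sqrt (1 + (t*Real.sin u)^2)) u := by
    intro u _
    set w := t * Real.cos u / Real.sqrt (1+t^2) with hwdef
    have hwlt : |w| < 1 := by
      rw [hwdef, abs_div, abs_of_pos hA, div_lt_one hA, abs_mul, abs_of_pos ht]
      have h1 : |Real.cos u| ≤ 1 := Real.abs_cos_le_one u
      nlinarith [hAsq, abs_nonneg (Real.cos u), mul_le_mul_of_nonneg_left h1 ht.le, sq_nonneg (Real.sqrt (1+t^2) - t)]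
    have hw1 : w ≠ 1 := by intro h; rw [h] at hwlt; simp at hwlt
    have hw2 : w ≠ -1 := by intro h; rw [h] at hwlt; simp at hwlt
    have harc := Real.hasDerivAt_arcsin hw2 hw1
    have hinner : HasDerivAt (fun u => t * Real.cos u / Real.sqrt (1+t^2))
        (-(t * Real.sin u) / Real.sqrt (1+t^2)) u := by
      have := ((Real.hasDerivAt_cos u).const_mul t).div_const (Real.sqrt (1+t^2))
      refine this.congr_deriv (Eq.symm ?_)
      ring
    have hcomp := ((harc.comp u hinner).const_mul t⁻¹).neg
    refine hcomp.congr_deriv (Eq.symm ?_)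
    have hNpos : 0 < Real.sqrt (1+(t*Real.sin u)^2) := Real.sqrt_pos.mpr (by positivity)
    have hwsq : 1 - w^2 = (1 + (t*Real.sin u)^2)/(1+t^2) := by
      rw [hwdef, div_pow, hAsq]
      field_simp
      nlinarith [Real.sin_sq_add_cos_sq u]
    rw [hwsq, Real.sqrt_div (by positivity)]
    field_simp
  have hcont : IntervalIntegrable (fun u => Real.sin u / Real.sqrt (1 + (t*Real.sin u)^2))
      volume 0 (π/2) := by
    apply Continuous.intervalIntegrable
    apply Continuous.div (by fun_prop) (by fun_prop)
    intro u
    exact ne_of_gt (Real.sqrt_pos.mpr (by positivity))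
  rw [intervalIntegral.integral_eq_sub_of_hasDerivAt hderiv hcont]
  rw [Real.cos_pi_div_two, Real.cos_zero, mul_zero, mul_one, zero_div, Real.arcsin_zero,
    ← Real.arctan_eq_arcsin]
  field_simp
  simp

lemma pow_integral_Ioc (c : ℝ) (n : ℕ) :
    ∫ t in Set.Ioc (0:ℝ) 1, c * t^(2*n) = c / (2*(n:ℝ)+1) := by
  rw [← intervalIntegral.integral_of_le zero_le_one,
    intervalIntegral.integral_const_mul, integral_pow]
  rw [zero_pow (by omega), one_pow]
  push_cast
  ring

lemma arctan_series_integral :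
    ∫ t in Set.Ioc (0:ℝ) 1, Real.arctan t / t = catalanG := by
  set F : ℕ → ℝ → ℝ := fun n t => ((-1:ℝ)^n / (2*(n:ℝ)+1)) * t^(2*n) with hFdef
  have hint : ∀ n : ℕ, IntegrableOn (F n) (Set.Ioc (0:ℝ) 1) volume := by
    intro n; apply Continuous.integrableOn_Ioc; fun_prop
  have hval : ∀ n : ℕ, ∫ t in Set.Ioc (0:ℝ) 1, F n t = (-1:ℝ)^n / (2*(n:ℝ)+1)^2 := by
    intro n
    rw [hFdef]
    simp only []
    rw [pow_integral_Ioc, div_div, ← sq]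
  have hnorm : ∀ n : ℕ, ∫ t in Set.Ioc (0:ℝ) 1, ‖F n t‖ = 1 / (2*(n:ℝ)+1)^2 := by
    intro n
    have hcongr : ∀ t ∈ Set.Ioc (0:ℝ) 1, ‖F n t‖ = (1 / (2*(n:ℝ)+1)) * t^(2*n) := by
      intro t htm
      rw [hFdef]
      simp only []
      rw [Real.norm_eq_abs, abs_mul, abs_div, abs_pow, abs_neg, abs_one, one_pow,
        abs_of_pos (by positivity : (0:ℝ) < 2*(n:ℝ)+1), abs_pow, abs_of_pos htm.1]
    rw [setIntegral_congr_fun measurableSet_Ioc hcongr, pow_integral_Ioc, div_div, ← sq]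
  have hsum : Summable fun n : ℕ => ∫ t in Set.Ioc (0:ℝ) 1, ‖F n t‖ := by
    apply Summable.of_nonneg_of_le (fun n => integral_nonneg fun t => norm_nonneg _)
      (fun n => ?_) ((summable_nat_add_iff 1).mpr
        ((Real.summable_one_div_nat_pow (p := 2)).mpr one_lt_two))
    rw [hnorm n]
    have h1 : ((n+1 : ℕ):ℝ) = (n:ℝ)+1 := by push_cast; ring
    rw [h1]
    apply one_div_le_one_div_of_le (by positivity)
    nlinarith [Nat.cast_nonneg (α := ℝ) n]
  have hae : ∀ᵐ t ∂(volume.restrict (Set.Ioc (0:ℝ) 1)), Real.arctan t / t = ∑' n, F n t := by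
    have hne1 : ∀ᵐ t : ℝ, t ≠ (1:ℝ) := by
      have h : {x : ℝ | ¬ x ≠ 1} = {1} := by ext x; simp
      rw [ae_iff, h]; exact measure_singleton 1
    filter_upwards [ae_restrict_mem measurableSet_Ioc, ae_restrict_of_ae hne1] with t htm htne
    have ht0 : 0 < t := htm.1
    have ht1 : t < 1 := lt_of_le_of_ne htm.2 htne
    have hx : ‖t‖ < 1 := by rw [Real.norm_eq_abs, abs_of_pos ht0]; exact ht1
    have hs := (Real.hasSum_arctan hx).div_const t
    have hfun : ∀ n : ℕ, (-1:ℝ)^n * t^(2*n+1) / ((2*n+1 : ℕ):ℝ) / t = F n t := by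
      intro n
      rw [hFdef]
      simp only []
      rw [pow_succ]
      have : ((2*n+1 : ℕ):ℝ) = 2*(n:ℝ)+1 := by push_cast; ring
      rw [this]
      field_simp
    exact ((hs.congr_fun (fun n => (hfun n).symm)).tsum_eq).symm
  rw [integral_congr_ae hae, ← integral_tsum_of_summable_integral_norm hint hsum,
    tsum_congr hval]
  rfl

lemma catalan_integral :
    ∫ u in (0:ℝ)..(π/2), Real.arsinh (Real.sin u) = catalanG := by
  have hpi2 : (0:ℝ) ≤ π/2 := by positivity
  set f : ℝ → ℝ → ℝ := fun u t => Real.sin u / Real.sqrt (1 + (t*Real.sin u)^2) with hfdef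
  have hfc : Continuous (Function.uncurry f) := by
    apply Continuous.div (by fun_prop) (by fun_prop)
    intro p
    exact ne_of_gt (Real.sqrt_pos.mpr (by positivity))
  have hfint : Integrable (Function.uncurry f)
      ((volume.restrict (Set.Ioc (0:ℝ) (π/2))).prod (volume.restrict (Set.Ioc (0:ℝ) 1))) := by
    rw [Measure.prod_restrict]
    apply IntegrableOn.mono_set
      (hfc.continuousOn.integrableOn_compact (isCompact_Icc.prod isCompact_Icc))
    exact Set.prod_mono Set.Ioc_subset_Icc_self Set.Ioc_subset_Icc_self
  calc ∫ u in (0:ℝ)..(π/2), Real.arsinh (Real.sin u)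
      = ∫ u in Set.Ioc (0:ℝ) (π/2), ∫ t in Set.Ioc (0:ℝ) 1, f u t := by
        rw [intervalIntegral.integral_of_le hpi2]
        apply setIntegral_congr_fun measurableSet_Ioc
        intro u _
        show Real.arsinh (Real.sin u) = _
        rw [arsinh_eq_integral (Real.sin u), intervalIntegral.integral_of_le zero_le_one]
    _ = ∫ t in Set.Ioc (0:ℝ) 1, ∫ u in Set.Ioc (0:ℝ) (π/2), f u t :=
        integral_integral_swap hfint
    _ = ∫ t in Set.Ioc (0:ℝ) 1, Real.arctan t / t := by
        apply setIntegral_congr_fun measurableSet_Ioc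
        intro t htm
        show _ = Real.arctan t / t
        rw [← inner_u_integral htm.1, intervalIntegral.integral_of_le hpi2]
    _ = catalanG := arctan_series_integral

theorem spanning_tree_constant_catalan :
    (1 / (4*π^2)) *
      (∫ k₁ in (-π)..π, ∫ k₂ in (-π)..π,
        Real.log (4 - 2*(Real.cos k₁ + Real.cos k₂)))
    = 4 * catalanG / π := by
  have hpi : (0:ℝ) < π := Real.pi_pos
  set H : ℝ → ℝ := fun k => ∫ t in (-π)..π, Real.log (4 - 2*(Real.cos k + Real.cos t))
    with hHdef
  set g : ℝ → ℝ := fun x => 4*π*Real.arsinh (Real.sin (x/2)) with hgdef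
  have hHeven : ∀ k, H k = H (-k) := by
    intro k
    rw [hHdef]
    simp only [Real.cos_neg]
  have hgpos : ∀ k : ℝ, k ∈ Set.Ioc 0 π → 0 < Real.sin (k/2) := by
    intro k hk
    apply Real.sin_pos_of_pos_of_lt_pi (by linarith [hk.1])
    linarith [hk.2, hpi]
  have hae : ∀ᵐ x : ℝ, x ∈ Set.uIoc (-π) π → H x = g |x| := by
    have hne0 : ∀ᵐ x : ℝ, x ≠ (0:ℝ) := by
      have h : {x : ℝ | ¬ x ≠ 0} = {0} := by ext x; simp
      rw [ae_iff, h]; exact measure_singleton 0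
    filter_upwards [hne0] with x hx hmem
    rw [Set.uIoc_of_le (by linarith)] at hmem
    rcases lt_or_gt_of_ne hx with hneg | hpos
    · have hmx : -x ∈ Set.Ioc 0 π := ⟨by linarith, by linarith [hmem.1]⟩
      rw [hHeven x, hgdef]
      have := inner_integral_eq (hgpos _ hmx)
      rw [hHdef]
      simp only []
      rw [this, abs_of_neg hneg]
    · have hmx : x ∈ Set.Ioc 0 π := ⟨hpos, hmem.2⟩
      rw [hHdef, hgdef]
      simp only []
      rw [inner_integral_eq (hgpos _ hmx), abs_of_pos hpos]
  have hgcont : Continuous (fun x : ℝ => g |x|) := by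
    rw [hgdef]
    exact (continuous_const.mul (Real.continuous_arsinh.comp
      (Real.continuous_sin.comp (continuous_abs.div_const 2))))
  have step1 : (∫ k₁ in (-π)..π, H k₁) = ∫ x in (-π)..π, g |x| :=
    intervalIntegral.integral_congr_ae hae
  have step2 : (∫ x in (-π)..π, g |x|) = 2 * ∫ x in (0:ℝ)..π, g x := by
    have hi1 : IntervalIntegrable (fun x : ℝ => g |x|) volume (-π) 0 :=
      hgcont.intervalIntegrable _ _
    have hi2 : IntervalIntegrable (fun x : ℝ => g |x|) volume 0 π :=
      hgcont.intervalIntegrable _ _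
    rw [← intervalIntegral.integral_add_adjacent_intervals hi1 hi2]
    have hneg : (∫ x in (-π)..(0:ℝ), g |x|) = ∫ x in (0:ℝ)..π, g |x| := by
      have := intervalIntegral.integral_comp_neg (a := (0:ℝ)) (b := π)
        (fun x : ℝ => g |x|)
      simp only [abs_neg, neg_zero] at this
      rw [← this]
    have habs : (∫ x in (0:ℝ)..π, g |x|) = ∫ x in (0:ℝ)..π, g x := by
      apply intervalIntegral.integral_congr
      intro x hxm
      rw [Set.uIcc_of_le (by linarith)] at hxm
      show g |x| = g x
      rw [abs_of_nonneg hxm.1]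
    rw [hneg, habs]
    ring
  have step3 : (∫ x in (0:ℝ)..π, g x) = 8*π*catalanG := by
    rw [hgdef]
    simp only []
    rw [intervalIntegral.integral_const_mul]
    have := intervalIntegral.integral_comp_div (a := (0:ℝ)) (b := π)
      (c := (2:ℝ)) (f := fun u => Real.arsinh (Real.sin u)) two_ne_zero
    rw [this]
    simp only [zero_div, smul_eq_mul]
    rw [catalan_integral]
    ring
  rw [show (∫ k₁ in (-π)..π, ∫ k₂ in (-π)..π,
        Real.log (4 - 2*(Real.cos k₁ + Real.cos k₂))) = ∫ k₁ in (-π)..π, H k₁ from rfl]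
  rw [step1, step2, step3]
  field_simp
  ring
end

section
/- The power series -x Σ-form identity: for |x| < 1, (1/(4π²)) ∫_{-π}^{π}∫_{-π}^{π} log[1 - (x/2)(cos k₁ + cos k₂)] dk₁ dk₂ = -Σ_{n≥1} (x/4)^{2n} (1/(2n)) C(2n,n)², where C(2n,n) is the central binomial coefficient. -/
open Real Finset intervalIntegral MeasureTheory

/-! ### Combinatorial lemmas -/

lemma choose_fac (k : ℕ) : (2*k).choose k * (k.factorial * k.factorial) = (2*k).factorial := by
  have h := Nat.choose_mul_factorial_mul_factorial (show k ≤ 2*k by omega)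
  have : 2*k - k = k := by omega
  rw [this] at h
  rw [← h]; ring

lemma key_choose (n i : ℕ) (h : i ≤ n) :
    (2*n).choose (2*i) * ((2*i).choose i * (2*(n-i)).choose (n-i)) =
      (2*n).choose n * (n.choose i * n.choose i) := by
  apply Nat.eq_of_mul_eq_mul_right (Nat.mul_pos (Nat.mul_pos i.factorial_pos i.factorial_pos)
    (Nat.mul_pos (n-i).factorial_pos (n-i).factorial_pos))
  have e1 := choose_fac i
  have e2 := choose_fac (n-i)
  have e3 := Nat.choose_mul_factorial_mul_factorial (show 2*i ≤ 2*n by omega)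
  have e4 := Nat.choose_mul_factorial_mul_factorial (show n ≤ 2*n by omega)
  have e5 := Nat.choose_mul_factorial_mul_factorial h
  have h1 : 2*n - 2*i = 2*(n-i) := by omega
  have h2 : 2*n - n = n := by omega
  rw [h1] at e3; rw [h2] at e4
  calc (2*n).choose (2*i) * ((2*i).choose i * (2*(n-i)).choose (n-i)) *
        (i.factorial * i.factorial * ((n-i).factorial * (n-i).factorial))
      = ((2*i).choose i * (i.factorial * i.factorial)) *
        ((2*(n-i)).choose (n-i) * ((n-i).factorial * (n-i).factorial)) *
        (2*n).choose (2*i) := by ring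
    _ = (2*n).choose (2*i) * (2*i).factorial * (2*(n-i)).factorial := by rw [e1, e2]; ring
    _ = (2*n).factorial := e3
    _ = (2*n).choose n * n.factorial * n.factorial := e4.symm
    _ = (2*n).choose n * ((n.choose i * i.factorial * (n-i).factorial) *
          (n.choose i * i.factorial * (n-i).factorial)) := by rw [e5]; ring
    _ = (2*n).choose n * (n.choose i * n.choose i) *
        (i.factorial * i.factorial * ((n-i).factorial * (n-i).factorial)) := by ring

lemma vandermonde_sq (n : ℕ) :
    ∑ i ∈ range (n+1), n.choose i * n.choose i = (2*n).choose n := by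
  rw [two_mul, Nat.add_choose_eq]
  rw [Finset.Nat.sum_antidiagonal_eq_sum_range_succ (fun a b => n.choose a * n.choose b)]
  exact Finset.sum_congr rfl fun i hi => by
    rw [Nat.choose_symm (by simpa using Nat.lt_succ_iff.mp (Finset.mem_range.mp hi))]

lemma central_sum (n : ℕ) :
    ∑ i ∈ range (n+1), (2*n).choose (2*i) * ((2*i).choose i * (2*(n-i)).choose (n-i)) =
      (2*n).choose n * (2*n).choose n := by
  rw [Finset.sum_congr rfl fun i hi => key_choose n i (Nat.lt_succ_iff.mp (Finset.mem_range.mp hi)),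
    ← Finset.mul_sum, vandermonde_sq]

/-! ### Integrals of powers of cosine -/

lemma cosInt_odd (i : ℕ) : ∫ k in (-π)..π, Real.cos k ^ (2*i+1) = 0 := by
  induction i with
  | zero => simp [integral_cos]
  | succ i ih =>
      have h : 2*(i+1)+1 = (2*i+1) + 2 := by ring
      rw [h, integral_cos_pow, ih]
      simp [Real.sin_pi]

lemma cosInt_even (i : ℕ) :
    ∫ k in (-π)..π, Real.cos k ^ (2*i) = 2*π * ((2*i).choose i : ℝ) / 4^i := by
  induction i with
  | zero => simp; ring
  | succ i ih =>
      have h : 2*(i+1) = 2*i + 2 := by ring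
      rw [h, integral_cos_pow, ih]
      simp only [Real.sin_pi, Real.sin_neg, neg_zero, mul_zero, zero_mul, sub_zero, zero_sub,
        neg_zero, zero_div, zero_add]
      have hc := Nat.succ_mul_centralBinom_succ i
      have hc' : ((i:ℝ)+1) * ((2*(i+1)).choose (i+1) : ℝ) = 2 * (2*i+1) * ((2*i).choose i : ℝ) := by
        exact_mod_cast congrArg (Nat.cast : ℕ → ℝ) hc
      have h4 : (4:ℝ)^(i+1) = 4 * 4^i := by ring
      have hne : ((i:ℝ)+1) ≠ 0 := by positivity
      have h4i : (4:ℝ)^i ≠ 0 := by positivity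
      have h2 : (2*(i+1)).choose (i+1) = (2*i+2).choose (i+1) := by
        rw [show 2*(i+1) = 2*i+2 from by ring]
      rw [h2] at hc'
      have hC' : (((2*i+2).choose (i+1) : ℕ) : ℝ) = 2*(2*(i:ℝ)+1)*((2*i).choose i : ℝ)/((i:ℝ)+1) := by
        rw [eq_div_iff hne]; linarith [hc']
      rw [hC', h4]
      push_cast
      field_simp
      ring

noncomputable def cI (j : ℕ) : ℝ := ∫ k in (-π)..π, Real.cos k ^ j

lemma cI_odd (a : ℕ) : cI (2*a+1) = 0 := cosInt_odd a
lemma cI_even (a : ℕ) : cI (2*a) = 2*π * ((2*a).choose a : ℝ) / 4^a := cosInt_even a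

noncomputable def S (M : ℕ) : ℝ := ∑ j ∈ range (M+1), (M.choose j : ℝ) * cI j * cI (M-j)

lemma inner_expand (M : ℕ) (k₁ : ℝ) :
    (∫ k₂ in (-π)..π, (Real.cos k₁ + Real.cos k₂)^M)
      = ∑ j ∈ range (M+1), ((M.choose j : ℝ) * cI (M-j)) * Real.cos k₁ ^ j := by
  have e : ∀ k₂ : ℝ, (Real.cos k₁ + Real.cos k₂)^M
      = ∑ j ∈ range (M+1), (Real.cos k₁ ^ j * (M.choose j : ℝ)) * Real.cos k₂ ^ (M-j) := by
    intro k₂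
    rw [add_pow]
    exact Finset.sum_congr rfl fun j _ => by ring
  simp_rw [e]
  rw [intervalIntegral.integral_finset_sum
    (fun j _ => (Continuous.intervalIntegrable (by fun_prop) _ _))]
  refine Finset.sum_congr rfl fun j _ => ?_
  rw [intervalIntegral.integral_const_mul]
  unfold cI; ring

lemma outer_eval (M : ℕ) :
    (∫ k₁ in (-π)..π, ∑ j ∈ range (M+1), ((M.choose j : ℝ) * cI (M-j)) * Real.cos k₁ ^ j)
      = S M := by
  unfold S
  rw [intervalIntegral.integral_finset_sum
    (fun j _ => (Continuous.intervalIntegrable (by fun_prop) _ _))]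
  refine Finset.sum_congr rfl fun j _ => ?_
  rw [intervalIntegral.integral_const_mul]
  show ((M.choose j : ℝ) * cI (M-j)) * cI j = (M.choose j : ℝ) * cI j * cI (M-j)
  ring

lemma S_odd (n : ℕ) : S (2*n+1) = 0 := by
  refine Finset.sum_eq_zero fun j hj => ?_
  rcases Nat.even_or_odd j with ⟨a, ha⟩ | ⟨a, ha⟩
  · have : 2*n+1 - j = 2*(n-a)+1 := by
      have := Finset.mem_range.mp hj; omega
    rw [this]
    have : cI (2*(n-a)+1) = 0 := cI_odd _
    rw [this]; ring
  · have : j = 2*a+1 := by omega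
    rw [this]
    have : cI (2*a+1) = 0 := cI_odd _
    rw [this]; ring

lemma S_even (n : ℕ) : S (2*n) = 4*π^2/4^n * ((2*n).choose n : ℝ)^2 := by
  unfold S
  have himg : (range (2*n+1)).filter (fun j => Even j) = (range (n+1)).image (fun i => 2*i) := by
    ext j
    simp only [Finset.mem_filter, Finset.mem_range, Finset.mem_image]
    constructor
    · rintro ⟨hj, a, ha⟩; exact ⟨a, by omega, by omega⟩
    · rintro ⟨a, ha, rfl⟩; exact ⟨by omega, a, by omega⟩
  rw [← Finset.sum_filter_of_ne (p := fun j => Even j) (by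
    intro j hj hne
    by_contra hodd
    rcases Nat.not_even_iff_odd.mp hodd with ⟨a, ha⟩
    exact hne (by rw [ha, cI_odd a]; ring))]
  rw [himg, Finset.sum_image (by intros a _ b _ h; simp only at h; omega)]
  have : ∀ i ∈ range (n+1),
      ((2*n).choose (2*i) : ℝ) * cI (2*i) * cI (2*n - 2*i)
        = (4*π^2/4^n) * ((2*n).choose (2*i) * ((2*i).choose i * (2*(n-i)).choose (n-i)) : ℕ) := by
    intro i hi
    have hin : i ≤ n := Nat.lt_succ_iff.mp (Finset.mem_range.mp hi)
    have h1 : 2*n - 2*i = 2*(n-i) := by omega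
    rw [h1, cI_even, cI_even]
    have h4 : (4:ℝ)^n = 4^i * 4^(n-i) := by rw [← pow_add]; congr 1; omega
    push_cast
    rw [h4]
    have : (4:ℝ)^i ≠ 0 := by positivity
    have : (4:ℝ)^(n-i) ≠ 0 := by positivity
    field_simp
    ring
  rw [Finset.sum_congr rfl this, ← Finset.mul_sum, ← Nat.cast_sum, central_sum]
  push_cast; ring

/-! ### Main theorem -/

theorem log_integral_central_binomial (x : ℝ) (hx : |x| < 1) :
    (1 / (4*π^2)) *
      (∫ k₁ in (-π)..π, ∫ k₂ in (-π)..π,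
        Real.log (1 - (x/2)*(Real.cos k₁ + Real.cos k₂)))
    = -∑' n : ℕ, (x/4)^(2*(n+1)) * (1 / (2*(n+1))) *
        ((Nat.choose (2*(n+1)) (n+1) : ℝ))^2 := by
  have hpi : (0:ℝ) < π := pi_pos
  have hle : (-π) ≤ π := by linarith
  -- basic bound
  have hb : ∀ k₁ k₂ : ℝ, |(x/2)*(Real.cos k₁ + Real.cos k₂)| ≤ |x| := by
    intro k₁ k₂
    rw [abs_mul, abs_div]
    have h1 : |Real.cos k₁ + Real.cos k₂| ≤ 2 := by
      calc |Real.cos k₁ + Real.cos k₂| ≤ |Real.cos k₁| + |Real.cos k₂| := abs_add_le _ _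
        _ ≤ 1 + 1 := add_le_add (Real.abs_cos_le_one _) (Real.abs_cos_le_one _)
        _ = 2 := by norm_num
    calc |x|/|2| * |Real.cos k₁ + Real.cos k₂| ≤ |x|/|2| * 2 := by
            apply mul_le_mul_of_nonneg_left h1; positivity
      _ = |x| := by rw [abs_two]; ring
  -- the series terms
  set F : ℕ → ℝ → ℝ → ℝ := fun m k₁ k₂ =>
    -(((x/2)*(Real.cos k₁ + Real.cos k₂))^(m+1) / ((m:ℝ)+1)) with hF
  have hFbound : ∀ m k₁ k₂, ‖F m k₁ k₂‖ ≤ |x|^(m+1) := by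
    intro m k₁ k₂
    rw [hF]
    simp only [norm_neg, norm_div, Real.norm_eq_abs, abs_pow]
    have h1 : ((1:ℝ)) ≤ |((m:ℝ)+1)| := by
      rw [abs_of_nonneg (by positivity)]; exact le_add_of_nonneg_left (Nat.cast_nonneg m)
    calc |(x/2)*(Real.cos k₁ + Real.cos k₂)|^(m+1) / |((m:ℝ)+1)|
        ≤ |(x/2)*(Real.cos k₁ + Real.cos k₂)|^(m+1) / 1 := by
          apply div_le_div_of_nonneg_left _ _ h1 <;> positivity
      _ ≤ |x|^(m+1) := by
          rw [div_one]; exact pow_le_pow_left₀ (abs_nonneg _) (hb k₁ k₂) _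
  -- inner swap
  have inner_swap : ∀ k₁ : ℝ,
      (∫ k₂ in (-π)..π, Real.log (1 - (x/2)*(Real.cos k₁ + Real.cos k₂)))
        = ∑' m : ℕ, ∫ k₂ in (-π)..π, F m k₁ k₂ := by
    intro k₁
    have hptw : ∀ k₂ : ℝ, Real.log (1 - (x/2)*(Real.cos k₁ + Real.cos k₂))
        = ∑' m : ℕ, F m k₁ k₂ := by
      intro k₂
      have h := (hasSum_pow_div_log_of_abs_lt_one
        (lt_of_le_of_lt (hb k₁ k₂) hx)).neg
      simpa [hF] using h.tsum_eq.symm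
    rw [intervalIntegral.integral_congr (g := fun k₂ => ∑' m, F m k₁ k₂)
      (fun k₂ _ => hptw k₂)]
    rw [intervalIntegral.integral_of_le hle]
    simp_rw [intervalIntegral.integral_of_le hle]
    rw [← MeasureTheory.integral_tsum_of_summable_integral_norm]
    · intro m
      apply Continuous.integrableOn_Ioc
      fun_prop
    · refine Summable.of_nonneg_of_le (fun m => integral_nonneg (fun a => norm_nonneg _))
        (fun m => ?_)
        (((summable_geometric_of_lt_one (abs_nonneg x) hx).mul_left |x|).mul_left (2*π))
      have : (∫ k₂ in Set.Ioc (-π) π, ‖F m k₁ k₂‖)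
          ≤ ∫ _k₂ in Set.Ioc (-π) π, |x|^(m+1) := by
        apply MeasureTheory.integral_mono_of_nonneg
        · exact Filter.Eventually.of_forall fun a => norm_nonneg _
        · exact (integrableOn_const_iff).mpr (Or.inr (by simp [Real.volume_Ioc]))
        · exact Filter.Eventually.of_forall fun a => hFbound m k₁ a
      calc (∫ k₂ in Set.Ioc (-π) π, ‖F m k₁ k₂‖) ≤ ∫ _k₂ in Set.Ioc (-π) π, |x|^(m+1) := this
        _ = 2*π * (|x| * |x|^m) := by
            rw [MeasureTheory.setIntegral_const, Real.volume_real_Ioc_of_le hle, smul_eq_mul]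
            ring
  -- the inner integral evaluated
  set G : ℕ → ℝ → ℝ := fun m k₁ => ∫ k₂ in (-π)..π, F m k₁ k₂ with hGdef
  have hG : ∀ m, G m = fun k₁ => (-(x/2)^(m+1) / ((m:ℝ)+1)) *
      ∑ j ∈ range (m+2), (((m+1).choose j : ℝ) * cI (m+1-j)) * Real.cos k₁ ^ j := by
    intro m
    funext k₁
    have e : ∀ k₂ : ℝ, F m k₁ k₂
        = (-(x/2)^(m+1) / ((m:ℝ)+1)) * (Real.cos k₁ + Real.cos k₂)^(m+1) := by
      intro k₂
      simp only [hF]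
      rw [mul_pow]
      ring
    rw [hGdef]
    simp only
    rw [intervalIntegral.integral_congr (fun k₂ _ => e k₂),
      intervalIntegral.integral_const_mul, inner_expand]
  have hGbound : ∀ m k₁, ‖G m k₁‖ ≤ |x|^(m+1) * (2*π) := by
    intro m k₁
    have := intervalIntegral.norm_integral_le_of_norm_le_const
      (C := |x|^(m+1)) (f := fun k₂ => F m k₁ k₂) (a := -π) (b := π)
      (fun k₂ _ => hFbound m k₁ k₂)
    calc ‖G m k₁‖ ≤ |x|^(m+1) * |π - (-π)| := this
      _ = |x|^(m+1) * (2*π) := by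
            rw [show |π - (-π)| = 2*π from by rw [abs_of_nonneg (by linarith : (0:ℝ) ≤ π - (-π))]; ring]
  have hGcont : ∀ m, Continuous (G m) := by
    intro m
    rw [hG m]
    exact continuous_const.mul (continuous_finset_sum _ fun j _ =>
      continuous_const.mul (Real.continuous_cos.pow j))
  -- outer swap
  have outer_swap :
      (∫ k₁ in (-π)..π, ∑' m : ℕ, G m k₁) = ∑' m : ℕ, ∫ k₁ in (-π)..π, G m k₁ := by
    rw [intervalIntegral.integral_of_le hle]
    simp_rw [intervalIntegral.integral_of_le hle]
    rw [← MeasureTheory.integral_tsum_of_summable_integral_norm]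
    · exact fun m => (hGcont m).integrableOn_Ioc
    · refine Summable.of_nonneg_of_le (fun m => integral_nonneg (fun a => norm_nonneg _))
        (fun m => ?_)
        ((((summable_geometric_of_lt_one (abs_nonneg x) hx).mul_left |x|).mul_left
          (2*π)).mul_left (2*π))
      have : (∫ k₁ in Set.Ioc (-π) π, ‖G m k₁‖)
          ≤ ∫ _k₁ in Set.Ioc (-π) π, |x|^(m+1) * (2*π) := by
        apply MeasureTheory.integral_mono_of_nonneg
        · exact Filter.Eventually.of_forall fun a => norm_nonneg _
        · exact (integrableOn_const_iff).mpr (Or.inr (by simp [Real.volume_Ioc]))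
        · exact Filter.Eventually.of_forall fun a => hGbound m a
      calc (∫ k₁ in Set.Ioc (-π) π, ‖G m k₁‖)
          ≤ ∫ _k₁ in Set.Ioc (-π) π, |x|^(m+1) * (2*π) := this
        _ = 2*π * (2*π * (|x| * |x|^m)) := by
            rw [MeasureTheory.setIntegral_const, Real.volume_real_Ioc_of_le hle, smul_eq_mul]
            ring
  -- summability of the integrals
  have hGsummable : Summable (fun m => ∫ k₁ in (-π)..π, G m k₁) := by
    apply Summable.of_norm_bounded
      ((((summable_geometric_of_lt_one (abs_nonneg x) hx).mul_left |x|).mul_left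
          (2*π)).mul_left (2*π))
    intro m
    have := intervalIntegral.norm_integral_le_of_norm_le_const
      (C := |x|^(m+1) * (2*π)) (f := fun k₁ => G m k₁) (a := -π) (b := π)
      (fun k₁ _ => hGbound m k₁)
    calc ‖∫ k₁ in (-π)..π, G m k₁‖ ≤ |x|^(m+1) * (2*π) * |π - (-π)| := this
      _ = 2*π * (2*π * (|x| * |x|^m)) := by
            rw [show |π - (-π)| = 2*π from by rw [abs_of_nonneg (by linarith : (0:ℝ) ≤ π - (-π))]; ring]
            ring
  -- evaluate each integral
  have hGeval : ∀ m, (∫ k₁ in (-π)..π, G m k₁) = (-(x/2)^(m+1) / ((m:ℝ)+1)) * S (m+1) := by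
    intro m
    rw [hG m, intervalIntegral.integral_const_mul, outer_eval]
  -- put everything together
  have key : (∫ k₁ in (-π)..π, ∫ k₂ in (-π)..π,
        Real.log (1 - (x/2)*(Real.cos k₁ + Real.cos k₂)))
      = ∑' m : ℕ, (-(x/2)^(m+1) / ((m:ℝ)+1)) * S (m+1) := by
    rw [intervalIntegral.integral_congr (g := fun k₁ => ∑' m, G m k₁)
      (fun k₁ _ => inner_swap k₁), outer_swap]
    exact tsum_congr hGeval
  rw [key, ← tsum_mul_left]
  set f : ℕ → ℝ := fun m => 1/(4*π^2) * ((-(x/2)^(m+1) / ((m:ℝ)+1)) * S (m+1)) with hfdef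
  have hfsummable : Summable f := by
    apply Summable.mul_left
    exact (summable_congr hGeval).mp hGsummable
  have heven : ∀ k, f (2*k) = 0 := by
    intro k
    have : S (2*k+1) = 0 := S_odd k
    simp only [hfdef, this, mul_zero, zero_mul]
  have hodd : ∀ k, f (2*k+1) =
      -((x/4)^(2*(k+1)) * (1 / (2*(k+1))) * ((Nat.choose (2*(k+1)) (k+1) : ℝ))^2) := by
    intro k
    have hS : S (2*k+1+1) = 4*π^2/4^(k+1) * (((2*(k+1)).choose (k+1) : ℝ))^2 := by
      rw [show 2*k+1+1 = 2*(k+1) from by ring]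
      exact S_even (k+1)
    rw [hfdef]
    simp only
    rw [hS]
    have hπ : π ≠ 0 := ne_of_gt hpi
    have h1 : ((2*k+1 : ℕ):ℝ) + 1 = 2*(k:ℝ)+2 := by push_cast; ring
    rw [h1]
    have h2 : ((2:ℝ)*k+2) ≠ 0 := by positivity
    have h4 : ((4:ℝ)^(k+1)) ≠ 0 := by positivity
    have h44 : (4:ℝ)^(2*(k+1)) = 2^(2*(k+1)) * 4^(k+1) := by
      rw [show (4:ℝ) = 2^2 from by norm_num, ← pow_mul, ← pow_mul, ← pow_add]
      congr 1; ring
    rw [show 2*k+1+1 = 2*(k+1) from by ring, div_pow, div_pow, h44]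
    field_simp
  have split := tsum_even_add_odd
    (hfsummable.comp_injective (fun a b h => by dsimp only at h; omega : Function.Injective (fun k => 2*k)))
    (hfsummable.comp_injective (fun a b h => by dsimp only at h; omega : Function.Injective (fun k => 2*k+1)))
  rw [← split]
  have e1 : ∑' k, f (2*k) = 0 := by
    rw [tsum_congr heven]; exact tsum_zero
  have e2 : ∑' k, f (2*k+1)
      = -∑' n : ℕ, (x/4)^(2*(n+1)) * (1 / (2*(n+1))) * ((Nat.choose (2*(n+1)) (n+1) : ℝ))^2 := by
    rw [tsum_congr hodd, tsum_neg]
  rw [e1, e2, zero_add]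
end

section
/- For real K ≥ 0, log Z(K) = log(2 cosh 2K) + (1/(8π²))∬ log[1 - (k/2)(cos k₁+cos k₂)] dk₁dk₂ with k = 2 tanh 2K sech 2K is a well-defined real number; i.e., the double integral converges absolutely, including at the critical point where k = 1 and the integrand has a logarithmic singularity at k₁ = k₂ = 0. -/
open Real MeasureTheory

/-- `|x| ^ (-1/2)` is integrable on `[-π, π]`. -/
lemma integrableOn_abs_rpow_neg_half :
    MeasureTheory.IntegrableOn (fun x : ℝ => |x| ^ (-(1/2) : ℝ)) (Set.Icc (-π) π) := by
  have h1 : IntervalIntegrable (fun x : ℝ => |x| ^ (-(1/2) : ℝ)) volume 0 π := by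
    have h := intervalIntegral.intervalIntegrable_rpow' (a := 0) (b := π) (r := -(1/2))
      (by norm_num)
    rw [intervalIntegrable_iff_integrableOn_Ioo_of_le pi_pos.le] at h ⊢
    exact h.congr_fun (fun x hx => by rw [abs_of_pos hx.1]) measurableSet_Ioo
  have h2 : IntervalIntegrable (fun x : ℝ => |x| ^ (-(1/2) : ℝ)) volume (-π) 0 := by
    have := (IntervalIntegrable.iff_comp_neg (f := fun x : ℝ => |x| ^ (-(1/2) : ℝ)) enorm_ne_top).mp h1
    simp only [abs_neg, neg_zero] at this
    exact this.symm
  have h3 := h2.trans h1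
  rw [intervalIntegrable_iff_integrableOn_Ioo_of_le
    (by linarith [pi_pos] : (-π : ℝ) ≤ π)] at h3
  rwa [integrableOn_Icc_iff_integrableOn_Ioo]

set_option maxHeartbeats 1000000 in
theorem onsager_integrand_integrable (K : ℝ) (hK : 0 ≤ K) :
    MeasureTheory.IntegrableOn
      (fun p : ℝ × ℝ =>
        Real.log (1 - ((2 * Real.tanh (2*K) * (1 / Real.cosh (2*K))) / 2) *
          (Real.cos p.1 + Real.cos p.2)))
      (Set.Icc (-π) π ×ˢ Set.Icc (-π) π) := by
  set c : ℝ := 2 * Real.tanh (2*K) * (1 / Real.cosh (2*K)) with hcdef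
  have hcosh : 0 < Real.cosh (2*K) := Real.cosh_pos _
  have hsinh : 0 ≤ Real.sinh (2*K) := Real.sinh_nonneg_iff.mpr (by linarith)
  have hc0 : 0 ≤ c := by
    rw [hcdef, Real.tanh_eq_sinh_div_cosh]
    positivity
  have hc1 : c ≤ 1 := by
    have hsq : Real.cosh (2*K) ^ 2 = Real.sinh (2*K) ^ 2 + 1 := Real.cosh_sq (2*K)
    have key : 2 * Real.sinh (2*K) ≤ Real.cosh (2*K) ^ 2 := by
      nlinarith [sq_nonneg (Real.sinh (2*K) - 1)]
    have hceq : c = 2 * Real.sinh (2*K) / Real.cosh (2*K) ^ 2 := by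
      rw [hcdef, Real.tanh_eq_sinh_div_cosh, sq]
      field_simp
    rw [hceq, div_le_one (by positivity)]
    exact key
  set S : Set ℝ := Set.Icc (-π) π with hSdef
  -- the dominating function
  set C : ℝ := 4 * (2 * π ^ 2) ^ ((1:ℝ)/4) with hCdef
  have hCpos : 0 < C := by
    rw [hCdef]; positivity
  -- g is integrable on the product
  have hg : MeasureTheory.IntegrableOn
      (fun p : ℝ × ℝ => Real.log 2 + C * |p.1| ^ (-(1/2) : ℝ)) (S ×ˢ S) := by
    have hfin : volume (S ×ˢ S) < ⊤ :=
      (isCompact_Icc.prod isCompact_Icc).measure_lt_top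
    have hconst : MeasureTheory.IntegrableOn (fun _ : ℝ × ℝ => Real.log 2) (S ×ˢ S) :=
      (integrableOn_const_iff enorm_ne_top).mpr (Or.inr hfin)
    have hone : MeasureTheory.Integrable (fun _ : ℝ => (1:ℝ)) (volume.restrict S) :=
      (integrableOn_const_iff enorm_ne_top).mpr (Or.inr measure_Icc_lt_top)
    have h1d : MeasureTheory.Integrable (fun x : ℝ => |x| ^ (-(1/2) : ℝ))
        (volume.restrict S) := integrableOn_abs_rpow_neg_half
    have hprod := h1d.mul_prod hone
    simp only [mul_one] at hprod
    rw [Measure.prod_restrict] at hprod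
    have hfst : MeasureTheory.IntegrableOn (fun p : ℝ × ℝ => |p.1| ^ (-(1/2) : ℝ))
        (S ×ˢ S) := by
      rw [MeasureTheory.IntegrableOn, Measure.volume_eq_prod]
      exact hprod
    exact hconst.add (hfst.const_mul C)
  -- measurability of the integrand
  have hmeas : AEStronglyMeasurable
      (fun p : ℝ × ℝ =>
        Real.log (1 - c / 2 * (Real.cos p.1 + Real.cos p.2)))
      (volume.restrict (S ×ˢ S)) := by
    apply Measurable.aestronglyMeasurable
    apply Real.measurable_log.comp
    fun_prop
  -- the set where p.1 = 0 is null
  have hne : ∀ᵐ p : ℝ × ℝ ∂(volume.restrict (S ×ˢ S)), p.1 ≠ 0 := by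
    apply ae_restrict_of_ae
    rw [ae_iff]
    have hset : {p : ℝ × ℝ | ¬ p.1 ≠ 0} = ({0} : Set ℝ) ×ˢ (Set.univ : Set ℝ) := by
      ext ⟨a, b⟩; simp [eq_comm]
    rw [hset, Measure.volume_eq_prod, Measure.prod_prod]
    simp
  -- main domination argument
  apply MeasureTheory.Integrable.mono hg hmeas
  filter_upwards [ae_restrict_mem ((measurableSet_Icc.prod measurableSet_Icc)), hne]
    with p hp hp1
  clear hg hmeas hne
  obtain ⟨x, y⟩ := p
  simp only [Set.mem_prod] at hp
  obtain ⟨hpx, hpy⟩ := hp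
  have hp1' : x ≠ 0 := hp1
  have hxabs : |x| ≤ π := abs_le.mpr ⟨hpx.1, hpx.2⟩
  have hx2 : x ^ 2 ≤ π ^ 2 := sq_le_sq' hpx.1 hpx.2
  have hcx : Real.cos x ≤ 1 - 2 / π ^ 2 * x ^ 2 := Real.cos_le_one_sub_mul_cos_sq hxabs
  have hcy : Real.cos y ≤ 1 := Real.cos_le_one y
  have hpi2 : (0:ℝ) < π ^ 2 := by positivity
  set u : ℝ := 1 - c / 2 * (Real.cos x + Real.cos y) with hudef
  -- lower bound on u
  have hcx2 : π ^ 2 * Real.cos x ≤ π ^ 2 - 2 * x ^ 2 := by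
    have h := mul_le_mul_of_nonneg_left hcx hpi2.le
    have he : π ^ 2 * (1 - 2 / π ^ 2 * x ^ 2) = π ^ 2 - 2 * x ^ 2 := by
      field_simp
    linarith [he ▸ h]
  have hulb : x ^ 2 ≤ 2 * π ^ 2 * u := by
    have hA : 0 ≤ c * (π ^ 2 - 2 * x ^ 2 - π ^ 2 * Real.cos x) :=
      mul_nonneg hc0 (by linarith)
    have hB : 0 ≤ (c * (1 - Real.cos y)) * π ^ 2 :=
      mul_nonneg (mul_nonneg hc0 (by linarith)) hpi2.le
    have h3 : 0 ≤ (1 - c) * (π ^ 2 - x ^ 2) :=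
      mul_nonneg (by linarith) (by linarith)
    rw [hudef]
    nlinarith [sq_nonneg x]
  have hx2pos : 0 < x ^ 2 := by positivity
  have hupos : 0 < u := by nlinarith
  -- upper bound on u
  have huub : u ≤ 2 := by
    have hcx' : -1 ≤ Real.cos x := Real.neg_one_le_cos x
    have hcy' : -1 ≤ Real.cos y := Real.neg_one_le_cos y
    have h4 : 0 ≤ c * (Real.cos x + Real.cos y + 2) := mul_nonneg hc0 (by linarith)
    rw [hudef]; nlinarith
  -- the rpow bound
  have hrpow : u⁻¹ ^ ((1:ℝ)/4) ≤ (2 * π ^ 2) ^ ((1:ℝ)/4) * |x| ^ (-(1/2) : ℝ) := by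
    have hinvle : u⁻¹ ≤ 2 * π ^ 2 / x ^ 2 := by
      rw [inv_le_iff_one_le_mul₀ hupos, div_mul_eq_mul_div, le_div_iff₀ hx2pos]
      linarith
    have step1 : u⁻¹ ^ ((1:ℝ)/4) ≤ (2 * π ^ 2 / x ^ 2) ^ ((1:ℝ)/4) :=
      Real.rpow_le_rpow (by positivity) hinvle (by norm_num)
    have step2 : (2 * π ^ 2 / x ^ 2) ^ ((1:ℝ)/4)
        = (2 * π ^ 2) ^ ((1:ℝ)/4) * |x| ^ (-(1/2) : ℝ) := by
      rw [Real.div_rpow (by positivity) (by positivity)]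
      rw [div_eq_mul_inv]
      congr 1
      rw [← sq_abs, ← Real.rpow_natCast |x| 2, ← Real.rpow_mul (abs_nonneg x),
        ← Real.rpow_neg (abs_nonneg x)]
      norm_num
    linarith [step2 ▸ step1]
  -- conclude
  have hxr : (0:ℝ) ≤ |x| ^ (-(1/2) : ℝ) := Real.rpow_nonneg (abs_nonneg x) _
  have hlog2 : (0:ℝ) ≤ Real.log 2 := Real.log_nonneg (by norm_num)
  have hterm : 0 ≤ C * |x| ^ (-(1/2) : ℝ) := mul_nonneg hCpos.le hxr
  have hgval : ‖Real.log 2 + C * |x| ^ (-(1/2) : ℝ)‖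
      = Real.log 2 + C * |x| ^ (-(1/2) : ℝ) := by
    rw [Real.norm_eq_abs, abs_of_nonneg (by linarith)]
  show ‖Real.log u‖ ≤ ‖Real.log 2 + C * |x| ^ (-(1/2) : ℝ)‖
  rw [hgval, Real.norm_eq_abs, abs_le]
  have hneg : -Real.log u ≤ 4 * u⁻¹ ^ ((1:ℝ)/4) := by
    have hlogeq : -Real.log u = 4 * Real.log (u⁻¹ ^ ((1:ℝ)/4)) := by
      rw [Real.log_rpow (inv_pos.mpr hupos), Real.log_inv]
      ring
    have hposr : 0 < u⁻¹ ^ ((1:ℝ)/4) := Real.rpow_pos_of_pos (inv_pos.mpr hupos) _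
    have hle : Real.log (u⁻¹ ^ ((1:ℝ)/4)) ≤ u⁻¹ ^ ((1:ℝ)/4) := by
      linarith [Real.log_le_sub_one_of_pos hposr]
    linarith
  have hCbound : -Real.log u ≤ C * |x| ^ (-(1/2) : ℝ) := by
    rw [hCdef]
    calc -Real.log u ≤ 4 * u⁻¹ ^ ((1:ℝ)/4) := hneg
      _ ≤ 4 * ((2 * π ^ 2) ^ ((1:ℝ)/4) * |x| ^ (-(1/2) : ℝ)) := by linarith
      _ = 4 * (2 * π ^ 2) ^ ((1:ℝ)/4) * |x| ^ (-(1/2) : ℝ) := by ring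
  constructor
  · linarith
  · have : Real.log u ≤ Real.log 2 := Real.log_le_log hupos huub
    linarith
end
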